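/- Let $k$ be a field and suppose graded finite-dimensional $k$-vector spaces $Q_*$ (linearized contact homology) and $H_*$ (homology of an $n$-sphere: $H_0 = H_n = k$, $H_m = 0$ otherwise, with $n \ge 2$) fit into a long exact sequence $\cdots \to H_{m+1} \to Q^{n-m-1} \to Q_m \to H_m \to \cdots$ where $Q^j \cong Q_j^\vee$ (so $\dim Q^j = \dim Q_j$), and suppose the map $Q_n \to H_n$ is surjective and $Q_0 \to H_0$ is zero. Let $P(t) = \sum_m (\dim Q_m) t^m$ be the Poincaré–Chekanov polynomial. Then $P(t) - t^{n-1} P(t^{-1}) = t^n - t^{-1}$ as Laurent polynomials. -/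
import Mathlib


open Module

/-- duality for a Legendrian homology `n`-sphere (`n ≥ 2`). Given a long
exact sequence `⋯ → H_{m+1} →σ Q^{n-m-1} →τ Q_m →ρ H_m → ⋯` with `H` the homology of an
`n`-sphere, `dim Q^j = dim Q_j`, `ρ` surjective in degree `n` and zero in degree `0`,
the Poincaré–Chekanov polynomial `P(t) = Σ (dim Q_m) tᵐ` satisfies
`P(t) - t^{n-1} P(t⁻¹) = tⁿ - t⁻¹`, stated here coefficientwise. -/
theorem stmt_6 (𝕜 : Type*) [Field 𝕜] (n : ℤ) (hn : 2 ≤ n)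
    (Q Q' H : ℤ → Type*)
    [∀ m, AddCommGroup (Q m)] [∀ m, Module 𝕜 (Q m)] [∀ m, FiniteDimensional 𝕜 (Q m)]
    [∀ m, AddCommGroup (Q' m)] [∀ m, Module 𝕜 (Q' m)] [∀ m, FiniteDimensional 𝕜 (Q' m)]
    [∀ m, AddCommGroup (H m)] [∀ m, Module 𝕜 (H m)] [∀ m, FiniteDimensional 𝕜 (H m)]
    (hdual : ∀ j : ℤ, finrank 𝕜 (Q' j) = finrank 𝕜 (Q j))
    (hH0 : finrank 𝕜 (H 0) = 1) (hHn : finrank 𝕜 (H n) = 1)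
    (hHv : ∀ m : ℤ, m ≠ 0 → m ≠ n → finrank 𝕜 (H m) = 0)
    (hfin : ∃ N : ℤ, ∀ j : ℤ, N < |j| → finrank 𝕜 (Q j) = 0)
    (σ : ∀ m, H m →ₗ[𝕜] Q' (n - m))
    (τ : ∀ m, Q' (n - (m+1)) →ₗ[𝕜] Q m)
    (ρ : ∀ m, Q m →ₗ[𝕜] H m)
    (hex1 : ∀ m : ℤ, LinearMap.range (σ (m+1)) = LinearMap.ker (τ m))
    (hex2 : ∀ m : ℤ, LinearMap.range (τ m) = LinearMap.ker (ρ m))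
    (hex3 : ∀ m : ℤ, LinearMap.range (ρ m) = LinearMap.ker (σ m))
    (hsurj : Function.Surjective (ρ n))
    (hzero : ρ 0 = 0) :
    ∀ j : ℤ, (finrank 𝕜 (Q j) : ℤ) - (finrank 𝕜 (Q (n - 1 - j)) : ℤ) =
      (if j = n then 1 else 0) - (if j = -1 then 1 else 0) := by
  have key : ∀ m : ℤ, finrank 𝕜 (LinearMap.range (σ m)) = if m = 0 then 1 else 0 := by
    intro m
    have e3 := (σ m).finrank_range_add_finrank_ker
    rw [← hex3 m] at e3
    by_cases h0 : m = 0
    · subst h0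
      rw [hzero, LinearMap.range_zero, finrank_bot 𝕜 (H 0), hH0] at e3
      rw [if_pos rfl]
      omega
    · rw [if_neg h0]
      by_cases hmn : m = n
      · have hsurj' : Function.Surjective (ρ m) := by rw [hmn]; exact hsurj
        have hHm : finrank 𝕜 (H m) = 1 := by rw [hmn]; exact hHn
        rw [LinearMap.range_eq_top.mpr hsurj', finrank_top 𝕜 (H m), hHm] at e3
        omega
      · rw [hHv m h0 hmn] at e3
        omega
  intro j
  have e1 := (τ j).finrank_range_add_finrank_ker
  rw [← hex1 j, hdual, key (j+1)] at e1
  have e1' : finrank 𝕜 (Q (n - (j + 1))) = finrank 𝕜 (Q (n - 1 - j)) := by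
    have hidx : n - (j + 1) = n - 1 - j := by ring
    rw [hidx]
  have e2 := (ρ j).finrank_range_add_finrank_ker
  rw [← hex2 j] at e2
  have e3 := (σ j).finrank_range_add_finrank_ker
  rw [← hex3 j, key j] at e3
  by_cases hjn : j = n
  · have hHj : finrank 𝕜 (H j) = 1 := by rw [hjn]; exact hHn
    rw [hHj, if_neg (show j ≠ 0 by omega)] at e3
    rw [if_neg (show j + 1 ≠ 0 by omega)] at e1
    rw [if_pos hjn, if_neg (show j ≠ -1 by omega)]
    omega
  · by_cases hj0 : j = 0
    · have hHj : finrank 𝕜 (H j) = 1 := by rw [hj0]; exact hH0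
      rw [hHj, if_pos hj0] at e3
      rw [if_neg (show j + 1 ≠ 0 by omega)] at e1
      rw [if_neg hjn, if_neg (show j ≠ -1 by omega)]
      omega
    · rw [hHv j hj0 hjn, if_neg hj0] at e3
      by_cases hjm : j = -1
      · rw [if_pos (show j + 1 = 0 by omega)] at e1
        rw [if_neg hjn, if_pos hjm]
        omega
      · rw [if_neg (show j + 1 ≠ 0 by omega)] at e1
        rw [if_neg hjn, if_neg hjm]
        omega
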